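/- For every integer t ≥ 1 there exists a finite tree T with exactly 3t leaves such that: (1) every non-leaf vertex of T has degree 3; (2) at most one pendant edge of T is lonely; and (3) every matching M of T that covers all non-leaf vertices of T covers exactly t leaves of T. -/

import Mathlib

open SimpleGraph

namespace PaperFormalization

variable {V : Type*}

/-- The degree of a vertex in a subgraph. -/
noncomputable def sdeg {G : SimpleGraph V} (H : G.Subgraph) (v : V) : ℕ :=
  (H.neighborSet v).ncard

/-- `H` is a `t`-factor of `G`: a spanning subgraph in which every vertex has degree `t`. -/
def IsTFactor {G : SimpleGraph V} (H : G.Subgraph) (t : ℕ) : Prop :=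
  H.IsSpanning ∧ ∀ v : V, sdeg H v = t

/-- A cycle of `G`: a connected 2-regular subgraph. -/
def IsCycleSG {G : SimpleGraph V} (C : G.Subgraph) : Prop :=
  C.Connected ∧ ∀ v ∈ C.verts, sdeg C v = 2

/-- An odd cycle: a cycle with an odd number of edges. -/
def IsOddCycleSG {G : SimpleGraph V} (C : G.Subgraph) : Prop :=
  IsCycleSG C ∧ Odd C.edgeSet.ncard

/-- A family of subgraphs is pairwise edge-disjoint. -/
def PairwiseEdgeDisjoint {G : SimpleGraph V} (𝒪 : Set G.Subgraph) : Prop :=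
  𝒪.Pairwise fun O₁ O₂ => Disjoint O₁.edgeSet O₂.edgeSet

/-- A family of subgraphs is pairwise vertex-disjoint. -/
def PairwiseVertexDisjoint {G : SimpleGraph V} (𝒪 : Set G.Subgraph) : Prop :=
  𝒪.Pairwise fun O₁ O₂ => Disjoint O₁.verts O₂.verts

/-- `G` is `r`-regular. -/
def IsRegular (G : SimpleGraph V) (r : ℕ) : Prop :=
  ∀ v : V, (G.neighborSet v).ncard = r

/-- `G` is 2-connected: connected, at least 3 vertices, and no cut vertex. -/
def TwoConnected [Fintype V] (G : SimpleGraph V) : Prop :=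
  G.Connected ∧ 3 ≤ Fintype.card V ∧ ∀ v : V, (G.induce {u | u ≠ v}).Connected

/-- `G` is `r`-connected: more than `r` vertices and deleting fewer than `r`
vertices leaves it connected. -/
def KConnected [Fintype V] (r : ℕ) (G : SimpleGraph V) : Prop :=
  r < Fintype.card V ∧ ∀ S : Set V, S.ncard < r → (G.induce Sᶜ).Connected

/-- A set of edges is a matching: pairwise non-adjacent edges. -/
def IsMatchingSet (M : Set (Sym2 V)) : Prop :=
  M.Pairwise fun e f => ∀ v : V, v ∈ e → v ∉ f

/-- A leaf of a graph: a vertex of degree 1. -/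
def IsLeaf {W : Type*} (T : SimpleGraph W) (v : W) : Prop :=
  (T.neighborSet v).ncard = 1

/-- A pendant edge: an edge incident with a leaf. -/
def IsPendant {W : Type*} (T : SimpleGraph W) (e : Sym2 W) : Prop :=
  e ∈ T.edgeSet ∧ ∃ v ∈ e, IsLeaf T v

/-- A lonely pendant edge: a pendant edge adjacent to no other pendant edge. -/
def IsLonely {W : Type*} (T : SimpleGraph W) (e : Sym2 W) : Prop :=
  IsPendant T e ∧ ∀ f : Sym2 W, IsPendant T f → f ≠ e → ∀ v : W, v ∈ e → v ∉ f

/-- A set of edges covers a vertex if some edge of the set is incident with it. -/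
def CoversVertex {W : Type*} (M : Set (Sym2 W)) (v : W) : Prop :=
  ∃ e ∈ M, v ∈ e

inductive Wk (k : ℕ) : Type
  | Z (j : Fin (k+1))
  | X (i : Fin k)
  | Y (i : Fin k)
  | M0
  | S (s : Fin (k+2))
  | A (i : Fin k)
  | B (i : Fin k)
deriving DecidableEq, Fintype

namespace Wk

variable {k : ℕ}

def p : Wk k → Wk k
  | Z j => if h : (j : ℕ) = 0 then Z ⟨0, Nat.succ_pos k⟩ else X ⟨(j : ℕ) - 1, by omega⟩
  | X i => Z ⟨((i : ℕ) + 1) / 2, by have := i.isLt; omega⟩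
  | Y i => X i
  | A i => Y i
  | B i => Y i
  | M0 => Z ⟨0, Nat.succ_pos k⟩
  | S s => if h : (s : ℕ) = 0 then Z ⟨0, Nat.succ_pos k⟩ else Z ⟨(k + (s : ℕ)) / 2, by have := s.isLt; omega⟩

def rank : Wk k → ℕ
  | Z j => 4 * (j : ℕ) + 2
  | X i => 4 * ((i : ℕ) + 1) + 1
  | Y i => 4 * ((i : ℕ) + 1) + 2
  | A i => 4 * ((i : ℕ) + 1) + 3
  | B i => 4 * ((i : ℕ) + 1) + 3
  | M0 => 3
  | S _ => 8 * k + 100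

def root : Wk k := Z ⟨0, Nat.succ_pos k⟩

lemma rank_p_lt {v : Wk k} (h : v ≠ root) : rank (p v) < rank v := by
  cases v with
  | Z j =>
    have hj : (j : ℕ) ≠ 0 := by
      intro h0
      exact h (by simp [root, Fin.ext_iff, h0])
    simp only [p, rank, dif_neg hj]
    omega
  | X i => simp only [p, rank]; have := i.isLt; omega
  | Y i => simp only [p, rank]; omega
  | A i => simp only [p, rank]; omega
  | B i => simp only [p, rank]; omega
  | M0 => simp only [p, rank]; omega
  | S s =>
    rcases eq_or_ne (s : ℕ) 0 with hs | hs
    · simp only [p, rank, dif_pos hs, Fin.val_zero]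
      omega
    · simp only [p, rank, dif_neg hs]
      omega

lemma p_root : (p (root : Wk k)) = root := by simp [p, root]

lemma p_ne_self {v : Wk k} (h : v ≠ root) : p v ≠ v :=
  fun he => absurd (rank_p_lt h) (by rw [he]; omega)

def G (k : ℕ) : SimpleGraph (Wk k) := SimpleGraph.fromRel (fun a b => p a = b)

lemma adj_iff {a b : Wk k} : (G k).Adj a b ↔ a ≠ b ∧ (p a = b ∨ p b = a) := by
  simp [G, fromRel_adj]

lemma adj_p {v : Wk k} (h : v ≠ root) : (G k).Adj v (p v) :=
  adj_iff.2 ⟨fun he => p_ne_self h he.symm, Or.inl rfl⟩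


lemma reachable_root (v : Wk k) : (G k).Reachable v root := by
  suffices H : ∀ n (v : Wk k), rank v ≤ n → (G k).Reachable v root by
    exact H (rank v) v le_rfl
  intro n
  induction n with
  | zero => intro v hv; exact absurd hv (by cases v <;> simp [rank])
  | succ n ih =>
    intro v hv
    by_cases h : v = root
    · rw [h]
    · exact ((adj_p h).reachable).trans (ih (p v) (by have := rank_p_lt h; omega))

lemma connected : (G k).Connected := by
  rw [connected_iff]
  exact ⟨fun u v => (reachable_root u).trans (reachable_root v).symm, ⟨root⟩⟩

lemma adj_max_eq_p {u w : Wk k} (hadj : (G k).Adj u w) (hr : rank w ≤ rank u) : w = p u := by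
  rcases adj_iff.1 hadj with ⟨hne, h | h⟩
  · exact h.symm
  · by_cases hw : w = root
    · subst hw; rw [p_root] at h; exact absurd h.symm hne
    · have := rank_p_lt hw
      rw [h] at this
      omega

lemma isAcyclic : (G k).IsAcyclic := by
  intro v c hc
  obtain ⟨u, hu, hmax⟩ := (c.support.toFinset).exists_max_image rank
    ⟨v, List.mem_toFinset.2 c.start_mem_support⟩
  rw [List.mem_toFinset] at hu
  have hmax' : ∀ w ∈ c.support, rank w ≤ rank u := fun w hw => hmax w (List.mem_toFinset.2 hw)
  have hcyc : (c.rotate u hu).IsCycle := Walk.IsCycle.rotate hu hc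
  have hsupp : ∀ w ∈ (c.rotate u hu).support, rank w ≤ rank u := by
    intro w hw
    rw [(c.rotate u hu).support_eq_cons] at hw
    rcases hw with _ | hw
    · exact le_rfl
    · have := (Walk.support_rotate c u hu).mem_iff.1 (by assumption)
      exact hmax' w (List.mem_of_mem_tail this)
  revert hcyc hsupp
  cases hcase : c.rotate u hu with
  | nil => intro hcyc _; exact Walk.IsCycle.not_of_nil hcyc
  | @cons _ w₁ _ h₁ q =>
    intro hcyc hsupp
    have hw1u : w₁ ≠ u := fun h => (G k).irrefl (h ▸ h₁)
    obtain ⟨w₂, h₂, r, hqr⟩ := Walk.exists_eq_cons_of_ne (Ne.symm hw1u) q.reverse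
    have hw2q : w₂ ∈ q.support := by
      have : w₂ ∈ q.reverse.support := by rw [hqr]; simp
      rwa [Walk.support_reverse, List.mem_reverse] at this
    have hedge2 : s(u, w₂) ∈ q.edges := by
      have : s(u, w₂) ∈ q.reverse.edges := by rw [hqr]; simp
      rwa [Walk.edges_reverse, List.mem_reverse] at this
    have hne12 : w₁ ≠ w₂ := by
      intro he
      have hnd : ((Walk.cons h₁ q).edges).Nodup := hcyc.edges_nodup
      rw [Walk.edges_cons] at hnd
      exact hnd.notMem (he ▸ hedge2)
    have hr1 : rank w₁ ≤ rank u := hsupp w₁ (by simp)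
    have hr2 : rank w₂ ≤ rank u := hsupp w₂ (by simp [hw2q])
    have e1 : w₁ = p u := adj_max_eq_p h₁ hr1
    have e2 : w₂ = p u := adj_max_eq_p h₂ hr2
    exact hne12 (e1.trans e2.symm)

lemma isTree : (G k).IsTree := ⟨connected, isAcyclic⟩

/-! ### Structure -/

def IsLf : Wk k → Prop
  | M0 => True
  | S _ => True
  | A _ => True
  | B _ => True
  | _ => False

lemma not_isLf_p (v : Wk k) : ¬ IsLf (p v) := by
  cases v <;> simp only [p] <;> (try split) <;> simp [IsLf]

lemma p_ne_of_isLf {u v : Wk k} (h : IsLf v) : p u ≠ v := fun he => not_isLf_p u (he ▸ h)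

lemma p_eq_Y_iff {u : Wk k} {i : Fin k} : p u = Y i ↔ u = A i ∨ u = B i := by
  cases u <;> simp only [p] <;> (try split) <;> simp

lemma p_eq_X_iff {u : Wk k} {i : Fin k} :
    p u = X i ↔ u = Y i ∨ u = Z ⟨(i : ℕ) + 1, by have := i.isLt; omega⟩ := by
  cases u with
  | Z j =>
    simp only [p]
    split
    · rename_i h0
      simp [Fin.ext_iff]
      omega
    · rename_i hj
      simp [Fin.ext_iff]
      omega
  | X i' => simp [p, Fin.ext_iff]
  | Y i' => simp [p, Fin.ext_iff]
  | M0 => simp [p, Fin.ext_iff]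
  | S s =>
    simp only [p]
    split <;> simp [Fin.ext_iff]
  | A i' => simp [p, Fin.ext_iff]
  | B i' => simp [p, Fin.ext_iff]

def slot (m : ℕ) (hm : m ≤ 2 * k + 1) : Wk k :=
  if h1 : 1 ≤ m ∧ m ≤ k then X ⟨m - 1, by omega⟩
  else if h0 : m = 0 then S ⟨0, by omega⟩
  else S ⟨m - k, by omega⟩

lemma slot_eq_X {m : ℕ} {hm : m ≤ 2 * k + 1} (h1 : 1 ≤ m) (h2 : m ≤ k) :
    slot m hm = X ⟨m - 1, by omega⟩ := dif_pos ⟨h1, h2⟩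

lemma slot_eq_S0 {hm : 0 ≤ 2 * k + 1} : slot 0 hm = S ⟨0, by omega⟩ := by
  rw [slot, dif_neg (by omega), dif_pos rfl]

lemma slot_eq_S {m : ℕ} {hm : m ≤ 2 * k + 1} (h1 : k + 1 ≤ m) :
    slot m hm = S ⟨m - k, by omega⟩ := by
  rw [slot, dif_neg (by omega), dif_neg (by omega)]

lemma isLf_slot_iff {m : ℕ} {hm : m ≤ 2 * k + 1} : IsLf (slot m hm) ↔ (m = 0 ∨ k + 1 ≤ m) := by
  rcases Nat.lt_or_ge m 1 with h | h
  · have : m = 0 := by omega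
    subst this
    rw [slot_eq_S0]
    simp [IsLf]
  · rcases le_or_gt m k with h2 | h2
    · rw [slot_eq_X h h2]; simp [IsLf]; omega
    · rw [slot_eq_S (by omega)]; simp [IsLf]; omega

lemma p_slot {m : ℕ} {hm : m ≤ 2 * k + 1} :
    p (slot m hm) = Z ⟨m / 2, by omega⟩ := by
  rcases Nat.lt_or_ge m 1 with h | h
  · have : m = 0 := by omega
    subst this
    rw [slot_eq_S0]
    simp [p, Fin.ext_iff]
  · rcases le_or_gt m k with h2 | h2
    · rw [slot_eq_X h h2]
      simp only [p, Z.injEq, Fin.mk.injEq]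
      omega
    · rw [slot_eq_S (by omega)]
      simp only [p]
      split
      · rename_i hc
        have hc' : m - k = 0 := hc
        omega
      · simp only [Z.injEq, Fin.mk.injEq]
        show (k + (m - k)) / 2 = m / 2
        omega

lemma slot_ne_slot {m m' : ℕ} {hm : m ≤ 2 * k + 1} {hm' : m' ≤ 2 * k + 1} (h : m ≠ m') :
    slot m hm ≠ slot m' hm' := by
  intro he
  have e0 : m = 0 ∨ (1 ≤ m ∧ m ≤ k) ∨ k + 1 ≤ m := by omega
  have e0' : m' = 0 ∨ (1 ≤ m' ∧ m' ≤ k) ∨ k + 1 ≤ m' := by omega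
  rcases e0 with h0 | ⟨ha, hb⟩ | ha <;> rcases e0' with h0' | ⟨hc, hd⟩ | hc
  · omega
  · subst h0; rw [slot_eq_S0, slot_eq_X hc hd] at he; simp at he
  · subst h0; rw [slot_eq_S0, slot_eq_S hc] at he; simp [Fin.ext_iff] at he; omega
  · subst h0'; rw [slot_eq_X ha hb, slot_eq_S0] at he; simp at he
  · rw [slot_eq_X ha hb, slot_eq_X hc hd] at he; simp [Fin.ext_iff] at he; omega
  · rw [slot_eq_X ha hb, slot_eq_S hc] at he; simp at he
  · subst h0'; rw [slot_eq_S ha, slot_eq_S0] at he; simp [Fin.ext_iff] at he; omega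
  · rw [slot_eq_S ha, slot_eq_X hc hd] at he; simp at he
  · rw [slot_eq_S ha, slot_eq_S hc] at he; simp [Fin.ext_iff] at he; omega

lemma eq_slot_X_iff {i : Fin k} {m : ℕ} {hm : m ≤ 2 * k + 1} :
    X i = slot m hm ↔ m = (i : ℕ) + 1 := by
  have hi := i.isLt
  have e0 : m = 0 ∨ (1 ≤ m ∧ m ≤ k) ∨ k + 1 ≤ m := by omega
  rcases e0 with h0 | ⟨ha, hb⟩ | ha
  · subst h0; rw [slot_eq_S0]; simp
  · rw [slot_eq_X ha hb]; simp [Fin.ext_iff]; omega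
  · rw [slot_eq_S ha]; simp; omega

lemma eq_slot_S_iff {s : Fin (k+2)} {m : ℕ} {hm : m ≤ 2 * k + 1} :
    S s = slot m hm ↔ (m = 0 ∧ (s : ℕ) = 0) ∨ (k + 1 ≤ m ∧ (s : ℕ) = m - k) := by
  have e0 : m = 0 ∨ (1 ≤ m ∧ m ≤ k) ∨ k + 1 ≤ m := by omega
  rcases e0 with h0 | ⟨ha, hb⟩ | ha
  · subst h0; rw [slot_eq_S0]; simp [Fin.ext_iff, -Fin.val_eq_zero_iff]
  · rw [slot_eq_X ha hb]; simp; omega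
  · rw [slot_eq_S ha]; simp [Fin.ext_iff, -Fin.val_eq_zero_iff]; omega

lemma ne_slot {u : Wk k} (hX : ∀ i, u ≠ X i) (hS : ∀ s, u ≠ S s) {m : ℕ}
    {hm : m ≤ 2 * k + 1} : u ≠ slot m hm := by
  have e0 : m = 0 ∨ (1 ≤ m ∧ m ≤ k) ∨ k + 1 ≤ m := by omega
  rcases e0 with h0 | ⟨ha, hb⟩ | ha
  · subst h0; rw [slot_eq_S0]; exact hS _
  · rw [slot_eq_X ha hb]; exact hX _
  · rw [slot_eq_S ha]; exact hS _

lemma p_eq_Z_iff {u : Wk k} {j : Fin (k+1)} :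
    p u = Z j ↔ ((u = root ∨ u = M0) ∧ (j : ℕ) = 0)
      ∨ u = slot (2 * (j : ℕ)) (by have := j.isLt; omega)
      ∨ u = slot (2 * (j : ℕ) + 1) (by have := j.isLt; omega) := by
  have hj := j.isLt
  cases u with
  | Z j' =>
    have hne1 := ne_slot (u := (Z j' : Wk k)) (by simp) (by simp)
      (m := 2 * (j : ℕ)) (hm := by omega)
    have hne2 := ne_slot (u := (Z j' : Wk k)) (by simp) (by simp)
      (m := 2 * (j : ℕ) + 1) (hm := by omega)
    have hj' := j'.isLt
    simp only [p]
    split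
    · rename_i h0
      simp [root, Fin.ext_iff, hne1, hne2, h0, -Fin.val_eq_zero_iff]
      omega
    · rename_i h0
      simp [root, Fin.ext_iff, hne1, hne2, h0, -Fin.val_eq_zero_iff]
  | X i =>
    have hi := i.isLt
    simp only [p, root]
    simp [Fin.ext_iff, eq_slot_X_iff, -Fin.val_eq_zero_iff]
    omega
  | Y i =>
    have hne1 := ne_slot (u := (Y i : Wk k)) (by simp) (by simp)
      (m := 2 * (j : ℕ)) (hm := by omega)
    have hne2 := ne_slot (u := (Y i : Wk k)) (by simp) (by simp)
      (m := 2 * (j : ℕ) + 1) (hm := by omega)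
    simp [p, root, hne1, hne2]
  | A i =>
    have hne1 := ne_slot (u := (A i : Wk k)) (by simp) (by simp)
      (m := 2 * (j : ℕ)) (hm := by omega)
    have hne2 := ne_slot (u := (A i : Wk k)) (by simp) (by simp)
      (m := 2 * (j : ℕ) + 1) (hm := by omega)
    simp [p, root, hne1, hne2]
  | B i =>
    have hne1 := ne_slot (u := (B i : Wk k)) (by simp) (by simp)
      (m := 2 * (j : ℕ)) (hm := by omega)
    have hne2 := ne_slot (u := (B i : Wk k)) (by simp) (by simp)
      (m := 2 * (j : ℕ) + 1) (hm := by omega)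
    simp [p, root, hne1, hne2]
  | M0 =>
    have hne1 := ne_slot (u := (M0 : Wk k)) (by simp) (by simp)
      (m := 2 * (j : ℕ)) (hm := by omega)
    have hne2 := ne_slot (u := (M0 : Wk k)) (by simp) (by simp)
      (m := 2 * (j : ℕ) + 1) (hm := by omega)
    simp [p, root, Fin.ext_iff, hne1, hne2, -Fin.val_eq_zero_iff]
    omega
  | S s =>
    have hs := s.isLt
    simp only [p, root]
    split
    · rename_i h0
      simp [Fin.ext_iff, eq_slot_S_iff, h0, -Fin.val_eq_zero_iff]
      omega
    · rename_i h0
      simp [Fin.ext_iff, eq_slot_S_iff, h0, -Fin.val_eq_zero_iff]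
      omega

/-! ### Neighbor sets and degrees -/

lemma not_isLf_root : ¬ IsLf (root : Wk k) := by simp [root, IsLf]

lemma nbr_leaf {v : Wk k} (hv : IsLf v) : (G k).neighborSet v = {p v} := by
  have hvr : v ≠ root := fun h => not_isLf_root (h ▸ hv)
  have hpv : p v ≠ v := p_ne_self hvr
  ext u
  simp only [mem_neighborSet, Set.mem_singleton_iff, adj_iff]
  constructor
  · rintro ⟨hne, h | h⟩
    · exact h.symm
    · exact absurd h (p_ne_of_isLf hv)
  · rintro rfl
    exact ⟨Ne.symm hpv, Or.inl rfl⟩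

lemma nbr_Y (i : Fin k) : (G k).neighborSet (Y i) = {X i, A i, B i} := by
  ext u
  simp only [mem_neighborSet, Set.mem_insert_iff, Set.mem_singleton_iff, adj_iff]
  constructor
  · rintro ⟨hne, h | h⟩
    · exact Or.inl ((show p (Y i) = X i from rfl) ▸ h.symm)
    · exact Or.inr (p_eq_Y_iff.1 h)
  · rintro (rfl | rfl | rfl)
    · exact ⟨by simp, Or.inl rfl⟩
    · exact ⟨by simp, Or.inr (p_eq_Y_iff.2 (Or.inl rfl))⟩
    · exact ⟨by simp, Or.inr (p_eq_Y_iff.2 (Or.inr rfl))⟩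

lemma nbr_X (i : Fin k) : (G k).neighborSet (X i) =
    {Z ⟨((i : ℕ) + 1) / 2, by have := i.isLt; omega⟩, Y i,
     Z ⟨(i : ℕ) + 1, by have := i.isLt; omega⟩} := by
  ext u
  simp only [mem_neighborSet, Set.mem_insert_iff, Set.mem_singleton_iff, adj_iff]
  constructor
  · rintro ⟨hne, h | h⟩
    · exact Or.inl h.symm
    · rcases p_eq_X_iff.1 h with h' | h'
      · exact Or.inr (Or.inl h')
      · exact Or.inr (Or.inr h')
  · rintro (rfl | rfl | rfl)
    · exact ⟨by simp, Or.inl rfl⟩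
    · exact ⟨by simp, Or.inr (p_eq_X_iff.2 (Or.inl rfl))⟩
    · exact ⟨by simp, Or.inr (p_eq_X_iff.2 (Or.inr rfl))⟩

def mate (j : Fin (k+1)) : Wk k :=
  if h : (j : ℕ) = 0 then M0 else X ⟨(j : ℕ) - 1, by have := j.isLt; omega⟩

lemma nbr_Z (j : Fin (k+1)) : (G k).neighborSet (Z j) =
    {mate j, slot (2 * (j : ℕ)) (by have := j.isLt; omega),
     slot (2 * (j : ℕ) + 1) (by have := j.isLt; omega)} := by
  have hj := j.isLt
  have hZne1 : (Z j : Wk k) ≠ slot (2 * (j : ℕ)) (by omega) :=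
    ne_slot (by simp) (by simp)
  have hZne2 : (Z j : Wk k) ≠ slot (2 * (j : ℕ) + 1) (by omega) :=
    ne_slot (by simp) (by simp)
  ext u
  simp only [mem_neighborSet, Set.mem_insert_iff, Set.mem_singleton_iff, adj_iff]
  constructor
  · rintro ⟨hne, h | h⟩
    · left
      rw [← h]
      simp only [p, mate]
      split
      · rename_i h0
        exfalso
        apply hne
        rw [← h]
        simp only [p]
        rw [dif_pos h0]
        simp [root, Fin.ext_iff, h0]
      · rfl
    · rcases p_eq_Z_iff.1 h with ⟨h1, h2⟩ | h' | h'
      · rcases h1 with rfl | rfl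
        · exact absurd (by simp [root, Fin.ext_iff, h2]) hne.symm
        · left; simp [mate, h2]
      · exact Or.inr (Or.inl h')
      · exact Or.inr (Or.inr h')
  · rintro (rfl | rfl | rfl)
    · by_cases h0 : (j : ℕ) = 0
      · refine ⟨by simp [mate, h0], Or.inr ?_⟩
        rw [p_eq_Z_iff]
        exact Or.inl ⟨Or.inr (by simp [mate, h0]), h0⟩
      · refine ⟨by simp [mate, h0], Or.inl ?_⟩
        simp only [p, mate, dif_neg h0]
    · exact ⟨hZne1, Or.inr (p_eq_Z_iff.2 (Or.inr (Or.inl rfl)))⟩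
    · exact ⟨hZne2, Or.inr (p_eq_Z_iff.2 (Or.inr (Or.inr rfl)))⟩

lemma ncard_triple {α : Type*} {a b c : α} (h1 : a ≠ b) (h2 : a ≠ c) (h3 : b ≠ c) :
    ({a, b, c} : Set α).ncard = 3 := by
  rw [Set.ncard_insert_of_notMem (by simp [h1, h2])
      (((Set.finite_singleton c).insert b)),
    Set.ncard_insert_of_notMem (by simp [h3]) (Set.finite_singleton c),
    Set.ncard_singleton]

lemma deg_of_not_isLf {v : Wk k} (hv : ¬ IsLf v) : ((G k).neighborSet v).ncard = 3 := by
  cases v with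
  | Z j =>
    have hj := j.isLt
    rw [nbr_Z]
    refine ncard_triple ?_ ?_ (slot_ne_slot (by omega))
    · unfold mate
      split
      · exact ne_slot (by simp) (by simp)
      · rename_i h0
        intro he
        rw [eq_slot_X_iff] at he
        simp only [Fin.val_mk] at he
        omega
    · unfold mate
      split
      · exact ne_slot (by simp) (by simp)
      · rename_i h0
        intro he
        rw [eq_slot_X_iff] at he
        simp only [Fin.val_mk] at he
        omega
  | X i =>
    have hi := i.isLt
    rw [nbr_X]
    exact ncard_triple (by simp) (by simp [Fin.ext_iff]; omega) (by simp)
  | Y i => rw [nbr_Y]; exact ncard_triple (by simp) (by simp) (by simp)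
  | M0 => exact absurd trivial hv
  | S s => exact absurd trivial hv
  | A i => exact absurd trivial hv
  | B i => exact absurd trivial hv

lemma deg_of_isLf {v : Wk k} (hv : IsLf v) : ((G k).neighborSet v).ncard = 1 := by
  rw [nbr_leaf hv, Set.ncard_singleton]

lemma isLeaf_iff {v : Wk k} : IsLeaf (G k) v ↔ IsLf v := by
  by_cases h : IsLf v
  · simp [IsLeaf, deg_of_isLf h, h]
  · simp [IsLeaf, deg_of_not_isLf h, h]

/-! ### Edge facts -/

lemma edge_decomp {e : Sym2 (Wk k)} (he : e ∈ (G k).edgeSet) :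
    ∃ a b, e = s(a, b) ∧ (G k).Adj a b := by
  induction e using Sym2.ind with
  | _ a b => exact ⟨a, b, rfl, he⟩

lemma no_leaf_leaf {a b : Wk k} (h : (G k).Adj a b) (ha : IsLf a) (hb : IsLf b) : False := by
  rcases adj_iff.1 h with ⟨_, hp | hp⟩
  · exact not_isLf_p a (hp ▸ hb)
  · exact not_isLf_p b (hp ▸ ha)

lemma adj_X_not_isLf {i : Fin k} {u : Wk k} (h : (G k).Adj (X i) u) : ¬ IsLf u := by
  have hu : u ∈ (G k).neighborSet (X i) := h
  rw [nbr_X] at hu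
  rcases hu with rfl | rfl | rfl <;> simp [IsLf]

lemma not_adj_X_X {i i' : Fin k} : ¬ (G k).Adj (X i) (X i') := by
  intro h
  rcases adj_iff.1 h with ⟨_, hp | hp⟩ <;> simp [p] at hp

lemma aux_X {a b : Wk k} (hp : p a = b) (ha : ¬ IsLf a) (hne : a ≠ b) :
    (∃ i, a = X i) ∨ (∃ i, b = X i) := by
  cases a with
  | Z j =>
    simp only [p] at hp
    split at hp
    · rename_i h0
      exact absurd (by rw [← hp]; simp [Fin.ext_iff, h0]) hne
    · exact Or.inr ⟨_, hp.symm⟩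
  | X i => exact Or.inl ⟨i, rfl⟩
  | Y i => exact Or.inr ⟨i, hp.symm⟩
  | M0 => exact absurd trivial ha
  | S s => exact absurd trivial ha
  | A i => exact absurd trivial ha
  | B i => exact absurd trivial ha

lemma exists_X_of_internal {a b : Wk k} (h : (G k).Adj a b) (ha : ¬ IsLf a) (hb : ¬ IsLf b) :
    (∃ i, a = X i) ∨ (∃ i, b = X i) := by
  rcases adj_iff.1 h with ⟨hne, hp | hp⟩
  · exact aux_X hp ha hne
  · exact (aux_X hp hb hne.symm).symm

lemma not_lf_of_X_mem {e : Sym2 (Wk k)} (he : e ∈ (G k).edgeSet) {i : Fin k}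
    (hXe : X i ∈ e) {v : Wk k} (hv : v ∈ e) : ¬ IsLf v := by
  obtain ⟨a, b, rfl, hadj⟩ := edge_decomp he
  rw [Sym2.mem_iff] at hXe hv
  rcases hXe with rfl | rfl <;> rcases hv with rfl | rfl
  · simp [IsLf]
  · exact adj_X_not_isLf hadj
  · exact adj_X_not_isLf hadj.symm
  · simp [IsLf]

lemma eq_of_X_mem {e : Sym2 (Wk k)} (he : e ∈ (G k).edgeSet) {a a' : Fin k}
    (h1 : X a ∈ e) (h2 : X a' ∈ e) : a = a' := by
  obtain ⟨c, d, rfl, hadj⟩ := edge_decomp he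
  rw [Sym2.mem_iff] at h1 h2
  rcases h1 with h1 | h1 <;> rcases h2 with h2 | h2
  · rw [← h1] at h2; injection h2 with h3; exact h3.symm
  · exact absurd (h1 ▸ h2 ▸ hadj) not_adj_X_X
  · exact absurd (h2 ▸ h1 ▸ hadj) not_adj_X_X
  · rw [← h1] at h2; injection h2 with h3; exact h3.symm

lemma eq_of_leaf_mem {e : Sym2 (Wk k)} (he : e ∈ (G k).edgeSet) {v v' : Wk k}
    (h1 : v ∈ e) (h2 : v' ∈ e) (l1 : IsLf v) (l2 : IsLf v') : v = v' := by
  obtain ⟨c, d, rfl, hadj⟩ := edge_decomp he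
  rw [Sym2.mem_iff] at h1 h2
  rcases h1 with rfl | rfl <;> rcases h2 with rfl | rfl
  · rfl
  · exact absurd (no_leaf_leaf hadj l1 l2) not_false
  · exact absurd (no_leaf_leaf hadj l2 l1) not_false
  · rfl

/-! ### The matching count -/

instance : DecidablePred (IsLf : Wk k → Prop) := fun v =>
  match v with
  | Z _ => isFalse (fun h => h)
  | X _ => isFalse (fun h => h)
  | Y _ => isFalse (fun h => h)
  | M0 => isTrue trivial
  | S _ => isTrue trivial
  | A _ => isTrue trivial
  | B _ => isTrue trivial

lemma X_covered {M : Set (Sym2 (Wk k))}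
    (hcov : ∀ v : Wk k, ¬ IsLeaf (G k) v → CoversVertex M v) (i : Fin k) :
    CoversVertex M (X i) :=
  hcov _ (by rw [isLeaf_iff]; exact fun h => h)

open Finset in
lemma count_main {M : Set (Sym2 (Wk k))} (hM : M ⊆ (G k).edgeSet)
    (hmatch : IsMatchingSet M)
    (hcov : ∀ v : Wk k, ¬ IsLeaf (G k) v → CoversVertex M v) :
    {v : Wk k | IsLeaf (G k) v ∧ CoversVertex M v}.ncard = k + 1 := by
  classical
  have huniq : ∀ (v : Wk k) (e f : Sym2 (Wk k)), e ∈ M → f ∈ M → v ∈ e → v ∈ f → e = f := by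
    intro v e f he hf hve hvf
    by_contra hne
    exact hmatch he hf hne v hve hvf
  set F : Wk k → Sym2 (Wk k) := fun v =>
    if h : CoversVertex M v then h.choose else s(v, v) with hFdef
  have hF1 : ∀ v : Wk k, CoversVertex M v → F v ∈ M ∧ v ∈ F v := by
    intro v h
    simp only [hFdef, dif_pos h]
    obtain ⟨he, hv⟩ := h.choose_spec
    exact ⟨he, hv⟩
  have hFeq : ∀ (v : Wk k) (e : Sym2 (Wk k)), e ∈ M → v ∈ e → F v = e := by
    intro v e he hv
    have hc : CoversVertex M v := ⟨e, he, hv⟩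
    obtain ⟨h1, h2⟩ := hF1 v hc
    exact huniq v (F v) e h1 he h2 hv
  set E : Finset (Sym2 (Wk k)) := Finset.univ.filter (· ∈ M) with hEdef
  have hmemE : ∀ e : Sym2 (Wk k), e ∈ E ↔ e ∈ M := by
    intro e; simp [hEdef]
  set I : Finset (Wk k) := Finset.univ.filter (fun v => ¬ IsLf v) with hIdef
  have hIcov : ∀ v ∈ I, CoversVertex M v := by
    intro v hv
    rw [hIdef, mem_filter] at hv
    exact hcov v (by rw [isLeaf_iff]; exact hv.2)
  have hkey : I.card = ∑ e ∈ E, (I.filter (fun v => F v = e)).card := by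
    apply Finset.card_eq_sum_card_fiberwise
    intro v hv
    rw [Finset.mem_coe, hmemE]
    exact (hF1 v (hIcov v hv)).1
  have hfiber : ∀ e ∈ E, I.filter (fun v => F v = e) = I.filter (fun v => v ∈ e) := by
    intro e he
    ext v
    simp only [mem_filter, and_congr_right_iff]
    intro hvI
    constructor
    · intro hFe; rw [← hFe]; exact (hF1 v (hIcov v hvI)).2
    · intro hvE; exact hFeq v e ((hmemE e).1 he) hvE
  have hfiber2 : ∀ e ∈ E, (I.filter (fun v => v ∈ e)).card
      = (if ∀ w ∈ e, ¬ IsLf w then 2 else 1) := by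
    intro e he
    have heS : e ∈ (G k).edgeSet := hM ((hmemE e).1 he)
    obtain ⟨a, b, rfl, hadj⟩ := edge_decomp heS
    by_cases hint : ∀ w ∈ s(a, b), ¬ IsLf w
    · rw [if_pos hint]
      have : I.filter (fun v => v ∈ s(a, b)) = {a, b} := by
        ext v
        simp only [mem_filter, Sym2.mem_iff, mem_insert, mem_singleton, hIdef,
          Finset.mem_univ, true_and]
        constructor
        · exact fun h => h.2
        · rintro (rfl | rfl)
          · exact ⟨hint _ (Sym2.mem_mk_left _ _), Or.inl rfl⟩
          · exact ⟨hint _ (Sym2.mem_mk_right _ _), Or.inr rfl⟩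
      rw [this, card_insert_of_notMem (by simp [hadj.ne]), card_singleton]
    · rw [if_neg hint]
      push_neg at hint
      obtain ⟨w, hw, hlf⟩ := hint
      rw [Sym2.mem_iff] at hw
      -- wlog : b is the leaf
      rcases hw with rfl | rfl
      · have hb : ¬ IsLf b := fun h => no_leaf_leaf hadj hlf h
        have : I.filter (fun v => v ∈ s(w, b)) = {b} := by
          ext v
          simp only [mem_filter, Sym2.mem_iff, mem_singleton, hIdef, Finset.mem_univ, true_and]
          constructor
          · rintro ⟨hni, rfl | rfl⟩
            · exact absurd hlf hni
            · rfl
          · rintro rfl; exact ⟨hb, Or.inr rfl⟩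
        rw [this, card_singleton]
      · have ha : ¬ IsLf a := fun h => no_leaf_leaf hadj h hlf
        have : I.filter (fun v => v ∈ s(a, w)) = {a} := by
          ext v
          simp only [mem_filter, Sym2.mem_iff, mem_singleton, hIdef, Finset.mem_univ, true_and]
          constructor
          · rintro ⟨hni, rfl | rfl⟩
            · rfl
            · exact absurd hlf hni
          · rintro rfl; exact ⟨ha, Or.inl rfl⟩
        rw [this, card_singleton]
  have hsum : I.card = ∑ e ∈ E, (if ∀ w ∈ e, ¬ IsLf w then 2 else 1) := by
    rw [hkey]
    apply Finset.sum_congr rfl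
    intro e he
    rw [hfiber e he, hfiber2 e he]
  set Eint : Finset (Sym2 (Wk k)) := E.filter (fun e => ∀ w ∈ e, ¬ IsLf w) with hEint
  set Epend : Finset (Sym2 (Wk k)) := E.filter (fun e => ¬ ∀ w ∈ e, ¬ IsLf w) with hEpend
  have hsplit : I.card = 2 * Eint.card + Epend.card := by
    rw [hsum, ← Finset.sum_filter_add_sum_filter_not E (fun e => ∀ w ∈ e, ¬ IsLf w)]
    rw [← hEint, ← hEpend]
    have hEintP : ∀ e ∈ Eint, ∀ w ∈ e, ¬ IsLf w := by
      intro e he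
      rw [hEint, Finset.mem_filter] at he
      exact he.2
    have hEpendP : ∀ e ∈ Epend, ¬ ∀ w ∈ e, ¬ IsLf w := by
      intro e he
      rw [hEpend, Finset.mem_filter] at he
      exact he.2
    rw [Finset.sum_ite_of_true hEintP, Finset.sum_ite_of_false hEpendP,
      Finset.sum_const, Finset.sum_const, smul_eq_mul, smul_eq_mul, mul_comm, mul_one]
  have hEintcard : Eint.card = k := by
    have hbij : (Finset.univ : Finset (Fin k)).card = Eint.card := by
      apply Finset.card_bij (fun (a : Fin k) _ => F (X a))
      · intro a _
        have hca := X_covered hcov a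
        obtain ⟨hFM, hFmem⟩ := hF1 _ hca
        rw [hEint, mem_filter, hmemE]
        exact ⟨hFM, fun w hw => not_lf_of_X_mem (hM hFM) hFmem hw⟩
      · intro a _ a' _ heq
        have h1 := (hF1 _ (X_covered hcov a)).2
        have h2 := (hF1 _ (X_covered hcov a')).2
        rw [heq] at h1
        exact eq_of_X_mem (hM (hF1 _ (X_covered hcov a')).1) h1 h2
      · intro e he
        rw [hEint, mem_filter, hmemE] at he
        obtain ⟨heM, hint⟩ := he
        obtain ⟨a, b, rfl, hadj⟩ := edge_decomp (hM heM)
        have hX : (∃ i, a = X i) ∨ (∃ i, b = X i) :=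
          exists_X_of_internal hadj (hint a (Sym2.mem_mk_left _ _))
            (hint b (Sym2.mem_mk_right _ _))
        rcases hX with ⟨i, rfl⟩ | ⟨i, rfl⟩
        · exact ⟨i, Finset.mem_univ i, hFeq _ _ heM (Sym2.mem_mk_left _ _)⟩
        · exact ⟨i, Finset.mem_univ i, hFeq _ _ heM (Sym2.mem_mk_right _ _)⟩
    rw [← hbij, Finset.card_univ, Fintype.card_fin]
  have hIcard : I.card = 3 * k + 1 := by
    have : I = (Finset.univ.image (Z : Fin (k+1) → Wk k))
        ∪ (Finset.univ.image (X : Fin k → Wk k))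
        ∪ (Finset.univ.image (Y : Fin k → Wk k)) := by
      ext v
      rw [hIdef]
      rw [Finset.mem_filter]
      cases v <;> simp [IsLf]
    rw [this]
    rw [Finset.card_union_of_disjoint, Finset.card_union_of_disjoint]
    · rw [Finset.card_image_of_injective _ (fun a b h => by injection h),
        Finset.card_image_of_injective _ (fun a b h => by injection h),
        Finset.card_image_of_injective _ (fun a b h => by injection h)]
      simp only [Finset.card_univ, Fintype.card_fin]
      omega
    · rw [Finset.disjoint_left]
      rintro x hx hy
      rw [Finset.mem_image] at hx hy
      obtain ⟨i, _, rfl⟩ := hx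
      obtain ⟨j, _, h⟩ := hy
      cases h
    · rw [Finset.disjoint_left]
      rintro x hx hy
      rw [Finset.mem_image] at hy
      rw [Finset.mem_union] at hx
      obtain ⟨j, _, rfl⟩ := hy
      rcases hx with hx | hx <;> rw [Finset.mem_image] at hx <;>
        obtain ⟨i, _, h⟩ := hx <;> cases h
  have hEpendcard : Epend.card = k + 1 := by omega
  have hset : {v : Wk k | IsLeaf (G k) v ∧ CoversVertex M v}
      = ↑(Finset.univ.filter (fun v : Wk k => IsLf v ∧ CoversVertex M v)) := by
    ext v
    simp [isLeaf_iff]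
  rw [hset, Set.ncard_coe_finset, ← hEpendcard]
  apply Finset.card_bij (fun v _ => F v)
  · intro v hv
    rw [mem_filter] at hv
    obtain ⟨_, hlf, hcv⟩ := hv
    obtain ⟨hFM, hFmem⟩ := hF1 v hcv
    rw [hEpend, mem_filter, hmemE]
    exact ⟨hFM, fun hall => hall v hFmem hlf⟩
  · intro v hv v' hv' heq
    rw [mem_filter] at hv hv'
    have h1 := (hF1 v hv.2.2).2
    have h2 := (hF1 v' hv'.2.2).2
    rw [heq] at h1
    exact eq_of_leaf_mem (hM (hF1 v' hv'.2.2).1) h1 h2 hv.2.1 hv'.2.1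
  · intro e he
    rw [hEpend, mem_filter, hmemE] at he
    obtain ⟨heM, hpend⟩ := he
    push_neg at hpend
    obtain ⟨w, hw, hlf⟩ := hpend
    refine ⟨w, ?_, hFeq w e heM hw⟩
    rw [mem_filter]
    exact ⟨Finset.mem_univ w, hlf, ⟨e, heM, hw⟩⟩

/-! ### Leaf count -/

lemma leaf_count : {v : Wk k | IsLeaf (G k) v}.ncard = 3 * k + 3 := by
  classical
  have hset : {v : Wk k | IsLeaf (G k) v}
      = ↑(Finset.univ.filter (IsLf : Wk k → Prop)) := by
    ext v; simp [isLeaf_iff]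
  rw [hset, Set.ncard_coe_finset]
  have heq : Finset.univ.filter (IsLf : Wk k → Prop)
      = (({M0} ∪ Finset.univ.image (S : Fin (k+2) → Wk k))
          ∪ Finset.univ.image (A : Fin k → Wk k))
          ∪ Finset.univ.image (B : Fin k → Wk k) := by
    ext v
    cases v <;> simp [IsLf]
  rw [heq]
  rw [Finset.card_union_of_disjoint, Finset.card_union_of_disjoint,
    Finset.card_union_of_disjoint]
  · rw [Finset.card_image_of_injective _ (fun a b h => by injection h),
      Finset.card_image_of_injective _ (fun a b h => by injection h),
      Finset.card_image_of_injective _ (fun a b h => by injection h)]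
    simp only [Finset.card_singleton, Finset.card_univ, Fintype.card_fin]
    omega
  · rw [Finset.disjoint_left]
    intro x hx hy
    rw [Finset.mem_image] at hy
    obtain ⟨j, _, rfl⟩ := hy
    simp at hx
  · rw [Finset.disjoint_left]
    intro x hx hy
    rw [Finset.mem_image] at hy
    obtain ⟨j, _, rfl⟩ := hy
    simp at hx
  · rw [Finset.disjoint_left]
    intro x hx hy
    rw [Finset.mem_image] at hy
    obtain ⟨j, _, rfl⟩ := hy
    simp at hx

/-! ### Lonely pendant edges -/

lemma leaf_ne_root {v : Wk k} (hv : IsLf v) : v ≠ root :=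
  fun h => not_isLf_root (h ▸ hv)

lemma pend_of_leaf {v : Wk k} (hv : IsLf v) : IsPendant (G k) s(v, p v) :=
  ⟨(G k).mem_edgeSet.2 (adj_p (leaf_ne_root hv)), ⟨v, Sym2.mem_mk_left _ _, isLeaf_iff.2 hv⟩⟩

lemma lonely_eq {e : Sym2 (Wk k)} (he : IsLonely (G k) e) :
    e = s(S ⟨1, by omega⟩, Z ⟨(k+1)/2, by omega⟩) := by
  obtain ⟨⟨heE, v, hv, hleaf⟩, hlone⟩ := he
  have hlf : IsLf v := isLeaf_iff.1 hleaf
  -- canonical representation of a pendant edge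
  have hrep : ∃ w : Wk k, IsLf w ∧ e = s(w, p w) := by
    obtain ⟨a, b, heq, hadj⟩ := edge_decomp heE
    rw [heq, Sym2.mem_iff] at hv
    rcases adj_iff.1 hadj with ⟨hne, hp | hp⟩
    · rcases hv with rfl | rfl
      · exact ⟨v, hlf, by rw [heq, hp]⟩
      · exact absurd (hp ▸ hlf) (not_isLf_p a)
    · rcases hv with rfl | rfl
      · exact absurd (hp ▸ hlf) (not_isLf_p b)
      · exact ⟨v, hlf, by rw [heq, ← hp, Sym2.eq_swap]⟩
  obtain ⟨w, hwlf, hwe⟩ := hrep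
  subst hwe
  -- the killing tool: a second leaf with the same parent yields a contradiction
  have hkill : ∀ u : Wk k, IsLf u → u ≠ w → p u = p w → False := by
    intro u hu hne hpp
    have hfne : s(u, p u) ≠ s(w, p w) := by
      intro hEq
      rw [Sym2.eq_iff] at hEq
      rcases hEq with ⟨h1, _⟩ | ⟨h1, _⟩
      · exact hne h1
      · exact not_isLf_p w (h1 ▸ hu)
    exact hlone s(u, p u) (pend_of_leaf hu) hfne (p w)
      (Sym2.mem_mk_right _ _) (by rw [← hpp]; exact Sym2.mem_mk_right _ _)
  cases w with
  | Z j => exact hwlf.elim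
  | X i => exact hwlf.elim
  | Y i => exact hwlf.elim
  | A i =>
    exact absurd (hkill (B i) trivial (by simp) rfl) not_false
  | B i =>
    exact absurd (hkill (A i) trivial (by simp) rfl) not_false
  | M0 =>
    refine absurd (hkill (S ⟨0, by omega⟩) trivial (by simp) ?_) not_false
    simp [p]
  | S s =>
    have hs := s.isLt
    rcases eq_or_ne (s : ℕ) 0 with h0 | h0
    · refine absurd (hkill M0 trivial (by simp) ?_) not_false
      simp [p, h0]
    · -- v = S s with s ≥ 1, slot m = k + s, parent Z ((k+s)/2)
      rcases Nat.even_or_odd (k + (s : ℕ)) with ⟨j, hj⟩ | ⟨j, hj⟩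
      · -- m = 2j even, sibling slot m+1 = 2j+1 is also an S-leaf
        have hslt : (s : ℕ) + 1 < k + 2 := by omega
        refine absurd (hkill (S ⟨(s : ℕ) + 1, hslt⟩) trivial
          (by simp [Fin.ext_iff]) ?_) not_false
        simp only [p, dif_neg h0, dif_neg (show ¬((s : ℕ) + 1 = 0) by omega)]
        simp only [Z.injEq, Fin.mk.injEq]
        omega
      · -- m = 2j+1 odd; sibling slot is m-1 = 2j
        rcases lt_or_ge k (2 * j) with hbig | hsmall
        · -- sibling 2j ≥ k+1 is an S-leaf, namely S (s-1)
          have h1 : 2 ≤ (s : ℕ) := by omega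
          refine absurd (hkill (S ⟨(s : ℕ) - 1, by omega⟩) trivial
            (by simp [Fin.ext_iff]; omega) ?_) not_false
          simp only [p, dif_neg h0, dif_neg (show ¬((s : ℕ) - 1 = 0) by omega)]
          simp only [Z.injEq, Fin.mk.injEq]
          omega
        · -- 2j ≤ k < 2j+1 = k+s, so s = 1 and k = 2j : the canonical lonely edge
          have hs1 : (s : ℕ) = 1 := by omega
          have : S s = (S ⟨1, by omega⟩ : Wk k) := by simp [Fin.ext_iff, hs1]
          rw [this]
          congr 1

lemma lonely_subsingleton : {e : Sym2 (Wk k) | IsLonely (G k) e}.Subsingleton := by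
  intro e he f hf
  rw [lonely_eq he, lonely_eq hf]


end Wk

/-- For every `t ≥ 1` there exists a tree with exactly `3t` leaves in which every
non-leaf vertex has degree 3, at most one pendant edge is lonely, and every matching
covering all non-leaf vertices covers exactly `t` leaves. -/
theorem stmt_4 (t : ℕ) (ht : 1 ≤ t) :
    ∃ (W : Type) (_ : Fintype W) (T : SimpleGraph W),
      T.IsTree ∧
      {v : W | IsLeaf T v}.ncard = 3 * t ∧
      (∀ v : W, ¬ IsLeaf T v → (T.neighborSet v).ncard = 3) ∧
      {e : Sym2 W | IsLonely T e}.Subsingleton ∧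
      ∀ M : Set (Sym2 W), M ⊆ T.edgeSet → IsMatchingSet M →
        (∀ v : W, ¬ IsLeaf T v → CoversVertex M v) →
        {v : W | IsLeaf T v ∧ CoversVertex M v}.ncard = t := by
  refine ⟨Wk (t - 1), inferInstance, Wk.G (t - 1), Wk.isTree, ?_, ?_,
    Wk.lonely_subsingleton, ?_⟩
  · rw [Wk.leaf_count]; omega
  · intro v h
    exact Wk.deg_of_not_isLf (fun hl => h (Wk.isLeaf_iff.2 hl))
  · intro M hM hmatch hcov
    rw [Wk.count_main hM hmatch hcov]
    omega

end PaperFormalization
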